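/- Let p∈[0,1]^5, δ∈(0,1), and α,β,γ∈ℝ satisfy the zero-determinant conditions: −1+δp1+(1−δ)p0 = α+β+γ, −1+δp2+(1−δ)p0 = αS+βT+γ, δp3+(1−δ)p0 = αT+βS+γ, and δp4+(1−δ)p0 = γ. Then for every q∈[0,1]^5 the average expected payoffs satisfy α·s_X + β·s_Y + γ = 0. -/

import Mathlib

noncomputable section
namespace ZDGame

open Matrix

/-- membership in the unit box `[0,1]^5` -/
def unitBox (v : Fin 5 → ℝ) : Prop := ∀ i, 0 ≤ v i ∧ v i ≤ 1

/-- the Markov transition matrix of the repeated game -/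
def Mmat (p q : Fin 5 → ℝ) : Matrix (Fin 4) (Fin 4) ℝ :=
  !![p 1 * q 1, p 1 * (1 - q 1), (1 - p 1) * q 1, (1 - p 1) * (1 - q 1);
     p 2 * q 3, p 2 * (1 - q 3), (1 - p 2) * q 3, (1 - p 2) * (1 - q 3);
     p 3 * q 2, p 3 * (1 - q 2), (1 - p 3) * q 2, (1 - p 3) * (1 - q 2);
     p 4 * q 4, p 4 * (1 - q 4), (1 - p 4) * q 4, (1 - p 4) * (1 - q 4)]

/-- the initial distribution v(0) -/
def vInit (p q : Fin 5 → ℝ) : Fin 4 → ℝ :=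
  ![p 0 * q 0, p 0 * (1 - q 0), (1 - p 0) * q 0, (1 - p 0) * (1 - q 0)]

def SYvec (T S : ℝ) : Fin 4 → ℝ := ![1, T, S, 0]
def SXvec (T S : ℝ) : Fin 4 → ℝ := ![1, S, T, 0]
def ones4 : Fin 4 → ℝ := ![1, 1, 1, 1]

/-- average expected payoff with payoff vector `f` -/
def payoff (δ : ℝ) (p q : Fin 5 → ℝ) (f : Fin 4 → ℝ) : ℝ :=
  (1 - δ) * dotProduct (Matrix.vecMul (vInit p q) (1 - δ • Mmat p q)⁻¹) f

def sX (δ T S : ℝ) (p q : Fin 5 → ℝ) : ℝ := payoff δ p q (SXvec T S)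
def sY (δ T S : ℝ) (p q : Fin 5 → ℝ) : ℝ := payoff δ p q (SYvec T S)

/-- the matrix `A(p,q,f)` from the determinant representation -/
def Amat (δ : ℝ) (p q : Fin 5 → ℝ) (f : Fin 4 → ℝ) : Matrix (Fin 4) (Fin 4) ℝ :=
  !![-1 + δ * p 1 * q 1 + (1 - δ) * p 0 * q 0, -1 + δ * p 1 + (1 - δ) * p 0,
       -1 + δ * q 1 + (1 - δ) * q 0, f 0;
     δ * p 3 * q 2 + (1 - δ) * p 0 * q 0, δ * p 3 + (1 - δ) * p 0,
       -1 + δ * q 2 + (1 - δ) * q 0, f 1;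
     δ * p 2 * q 3 + (1 - δ) * p 0 * q 0, -1 + δ * p 2 + (1 - δ) * p 0,
       δ * q 3 + (1 - δ) * q 0, f 2;
     δ * p 4 * q 4 + (1 - δ) * p 0 * q 0, δ * p 4 + (1 - δ) * p 0,
       δ * q 4 + (1 - δ) * q 0, f 3]

/-- `D(p,q,f) = det A(p,q,f)` -/
def Dd (δ : ℝ) (p q : Fin 5 → ℝ) (f : Fin 4 → ℝ) : ℝ := (Amat δ p q f).det

/-- pcZD strategy -/
def IsPcZD (δ T S : ℝ) (p : Fin 5 → ℝ) : Prop :=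
  ∃ φ χ κ : ℝ, 0 < φ ∧ 1 ≤ χ ∧
    δ * p 1 + (1 - δ) * p 0 = 1 - φ * (χ - 1) * (1 - κ) ∧
    δ * p 2 + (1 - δ) * p 0 = 1 - φ * (χ * T - S - (χ - 1) * κ) ∧
    δ * p 3 + (1 - δ) * p 0 = φ * (T - χ * S + (χ - 1) * κ) ∧
    δ * p 4 + (1 - δ) * p 0 = φ * (χ - 1) * κ

/-- partial derivative of a function of the strategy vector `q`
in the coordinate `j`, taken at `q` -/
def pderiv (f : (Fin 5 → ℝ) → ℝ) (j : Fin 5) (q : Fin 5 → ℝ) : ℝ :=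
  deriv (fun t => f (Function.update q j t)) (q j)

/-- the 3×3 minor `M_ℓ` of `A(p,q,f)` (delete row `ℓ` and the 4th column);
here `ℓ : Fin 4` corresponds to the paper's `ℓ+1 ∈ {1,2,3,4}` -/
def Mminor (δ : ℝ) (p q : Fin 5 → ℝ) (ℓ : Fin 4) : Matrix (Fin 3) (Fin 3) ℝ :=
  Matrix.of fun i j => Amat δ p q ones4 (ℓ.succAbove i) (Fin.castSucc j)

/-- the index map λ(1)=1, λ(2)=3, λ(3)=2, λ(4)=4 (0-based on the left) -/
def lamIdx : Fin 4 → Fin 5 := ![1, 3, 2, 4]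

/-- the vector `r_ℓ` -/
def rvec (δ : ℝ) (p q : Fin 5 → ℝ) (ℓ : Fin 4) (i : Fin 3) : ℝ :=
  (p (lamIdx ℓ) * Amat δ p q ones4 ℓ 2 - Amat δ p q ones4 ℓ 0)
    + Mminor δ p q ℓ i 0 - p (lamIdx ℓ) * Mminor δ p q ℓ i 2

/-- the 2×2 determinants `𝔡_ℓ`; `ℓ : Fin 4` corresponds to the paper's `ℓ+1` -/
def frakD (δ T S : ℝ) (p q : Fin 5 → ℝ) (ℓ : Fin 4) : ℝ :=
  ![ (rvec δ p q 0 0 + rvec δ p q 0 1) * (-1) - (T + S - 2) * rvec δ p q 0 2,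
     (rvec δ p q 1 1 - 2 * rvec δ p q 1 2) * 1 - (T + S) * (rvec δ p q 1 0 - rvec δ p q 1 2),
     (rvec δ p q 2 0 - rvec δ p q 2 2) * (T + S) - 1 * (rvec δ p q 2 1 - 2 * rvec δ p q 2 2),
     (rvec δ p q 3 1 + rvec δ p q 3 2) * 1 - (T + S) * rvec δ p q 3 0 ] ℓ

def u1 (δ : ℝ) (p q : Fin 5 → ℝ) : ℝ :=
  (-1 + δ * q 1 - δ * q 4) * p 0 - (-1 + δ * p 1 * q 1 - δ * p 4 * q 4)
def u2 (δ : ℝ) (p q : Fin 5 → ℝ) : ℝ :=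
  (-1 + δ * q 2 - δ * q 4) * p 0 - (δ * p 3 * q 2 - δ * p 4 * q 4)
def u3 (δ : ℝ) (p q : Fin 5 → ℝ) : ℝ :=
  (δ * q 3 - δ * q 4) * p 0 - (δ * p 2 * q 3 - δ * p 4 * q 4)

/-- the determinant `𝔡_0 = det [[u1, 1], [u2+u3, T+S]]` -/
def frakD0 (δ T S : ℝ) (p q : Fin 5 → ℝ) : ℝ :=
  u1 δ p q * (T + S) - 1 * (u2 δ p q + u3 δ p q)


/-! Press–Dyson argument. Put `w = v(0) (I - δM)⁻¹`, so that `w · ((I - δM) g) = v(0) · g` for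
every `g`; `I - δM` is invertible because `M` is stochastic, which makes `I - δM` strictly
diagonally dominant. Let `e = (1,1,0,0)` mark the states in which `X` cooperates; then
`M e = (p₁,p₂,p₃,p₄)` and `v(0) · e = p₀`. The ZD conditions say that
`α S_X + β S_Y + γ 𝟙 = (1-δ) p₀ 𝟙 - (I - δM) e`. Since `(I - δM) 𝟙 = (1-δ) 𝟙` the payoff of `𝟙`
is `1`, so the payoff of the right-hand side is `(1-δ) p₀ - (1-δ) v(0) · e = 0`. -/

section Resolvent

variable {n : Type*} [Fintype n] [DecidableEq n]

theorem det_one_sub_smul_ne_zero_of_mem_rowStochastic {M : Matrix n n ℝ}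
    (hM : M ∈ rowStochastic ℝ n) {δ : ℝ} (hδ0 : 0 ≤ δ) (hδ1 : δ < 1) :
    (1 - δ • M).det ≠ 0 := by
  refine det_ne_zero_of_sum_row_lt_diag fun k => ?_
  have hkk : M k k ≤ 1 := le_one_of_mem_rowStochastic hM
  have hoff : ∀ j ∈ Finset.univ.erase k, ‖(1 - δ • M) k j‖ = δ * M k j := fun j hj => by
    rw [Matrix.sub_apply, Matrix.smul_apply, one_apply_ne (Finset.ne_of_mem_erase hj).symm,
      smul_eq_mul, zero_sub, norm_neg, Real.norm_of_nonneg (mul_nonneg hδ0 (hM.1 k j))]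
  -- Gershgorin: the off-diagonal mass `δ (1 - M k k)` falls short of `1 - δ M k k` by `1 - δ`.
  rw [Finset.sum_congr rfl hoff, ← Finset.mul_sum, Finset.sum_erase_eq_sub (Finset.mem_univ k),
    sum_row_of_mem_rowStochastic hM k, Matrix.sub_apply, Matrix.smul_apply, one_apply_eq,
    smul_eq_mul, Real.norm_of_nonneg (by nlinarith)]
  nlinarith

theorem one_sub_smul_mulVec_one {M : Matrix n n ℝ} (hM : M *ᵥ 1 = 1) (δ : ℝ) :
    (1 - δ • M) *ᵥ 1 = (1 - δ) • 1 := by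
  rw [sub_mulVec, one_mulVec, smul_mulVec, hM, sub_smul, one_smul]

theorem vecMul_nonsing_inv_dotProduct_mulVec {R : Type*} [CommRing R] {A : Matrix n n R}
    (hA : IsUnit A.det) (v g : n → R) : v ᵥ* A⁻¹ ⬝ᵥ (A *ᵥ g) = v ⬝ᵥ g := by
  rw [dotProduct_mulVec, vecMul_vecMul, nonsing_inv_mul _ hA, vecMul_one]

end Resolvent

section Payoff

variable {δ : ℝ} {p q : Fin 5 → ℝ}

theorem payoff_add (f g : Fin 4 → ℝ) :
    payoff δ p q (f + g) = payoff δ p q f + payoff δ p q g := by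
  simp only [payoff, dotProduct_add, mul_add]

theorem payoff_sub (f g : Fin 4 → ℝ) :
    payoff δ p q (f - g) = payoff δ p q f - payoff δ p q g := by
  simp only [payoff, dotProduct_sub, mul_sub]

theorem payoff_smul (c : ℝ) (f : Fin 4 → ℝ) : payoff δ p q (c • f) = c * payoff δ p q f := by
  simp only [payoff, dotProduct_smul, smul_eq_mul]
  ring

theorem ones4_eq_one : ones4 = 1 := by
  ext i; fin_cases i <;> rfl

theorem vInit_dotProduct_one (p q : Fin 5 → ℝ) : vInit p q ⬝ᵥ 1 = 1 := by
  simp only [vInit, dotProduct, Fin.sum_univ_four, Pi.one_apply, mul_one, Fin.isValue, cons_val,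
    cons_val_zero, cons_val_one]
  ring

theorem Mmat_mulVec_one (p q : Fin 5 → ℝ) : Mmat p q *ᵥ 1 = 1 := by
  ext i
  fin_cases i <;>
    simp only [Mmat, mulVec, dotProduct, Fin.sum_univ_four, Pi.one_apply, mul_one,
      Fin.isValue, Fin.zero_eta, Fin.mk_one, Fin.reduceFinMk,
      of_apply, cons_val', cons_val, cons_val_zero, cons_val_one, cons_val_fin_one] <;>
    ring

theorem Mmat_mem_rowStochastic (hp : unitBox p) (hq : unitBox q) :
    Mmat p q ∈ rowStochastic ℝ (Fin 4) := by
  refine ⟨fun i j => ?_, Mmat_mulVec_one p q⟩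
  have := hp 1; have := hp 2; have := hp 3; have := hp 4
  have := hq 1; have := hq 2; have := hq 3; have := hq 4
  fin_cases i <;> fin_cases j <;>
    simp only [Mmat, Fin.isValue, Fin.zero_eta, Fin.mk_one, Fin.reduceFinMk,
      of_apply, cons_val', cons_val, cons_val_zero, cons_val_one, cons_val_fin_one] <;>
    apply mul_nonneg <;> linarith

theorem payoff_mulVec (hdet : IsUnit (1 - δ • Mmat p q).det) (g : Fin 4 → ℝ) :
    payoff δ p q ((1 - δ • Mmat p q) *ᵥ g) = (1 - δ) * (vInit p q ⬝ᵥ g) := by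
  rw [payoff, vecMul_nonsing_inv_dotProduct_mulVec hdet]

theorem payoff_ones4 (hdet : IsUnit (1 - δ • Mmat p q).det) : payoff δ p q ones4 = 1 :=
  calc payoff δ p q ones4
      = vInit p q ᵥ* (1 - δ • Mmat p q)⁻¹ ⬝ᵥ ((1 - δ) • 1) := by
        rw [payoff, ones4_eq_one, dotProduct_smul, smul_eq_mul]
    _ = 1 := by
        rw [← one_sub_smul_mulVec_one (Mmat_mulVec_one p q),
          vecMul_nonsing_inv_dotProduct_mulVec hdet, vInit_dotProduct_one]

/-- Indicator of the states `CC`, `CD`, in which `X` cooperates. -/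
def coopX : Fin 4 → ℝ := ![1, 1, 0, 0]

theorem Mmat_mulVec_coopX (p q : Fin 5 → ℝ) : Mmat p q *ᵥ coopX = ![p 1, p 2, p 3, p 4] := by
  ext i
  fin_cases i <;>
    simp only [Mmat, coopX, mulVec, dotProduct, Fin.sum_univ_four, mul_one, mul_zero, add_zero,
      Fin.isValue, Fin.zero_eta, Fin.mk_one, Fin.reduceFinMk,
      of_apply, cons_val', cons_val, cons_val_zero, cons_val_one, cons_val_fin_one] <;>
    ring

theorem vInit_dotProduct_coopX (p q : Fin 5 → ℝ) : vInit p q ⬝ᵥ coopX = p 0 := by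
  simp only [vInit, coopX, dotProduct, Fin.sum_univ_four, mul_one, mul_zero, add_zero,
    Fin.isValue, cons_val, cons_val_zero, cons_val_one]
  ring

theorem payoff_zd_vector (hdet : IsUnit (1 - δ • Mmat p q).det) :
    payoff δ p q (δ • ![p 1, p 2, p 3, p 4] + ((1 - δ) * p 0) • ones4 - coopX) = 0 := by
  have hvec : δ • ![p 1, p 2, p 3, p 4] + ((1 - δ) * p 0) • ones4 - coopX
      = ((1 - δ) * p 0) • ones4 - (1 - δ • Mmat p q) *ᵥ coopX := by
    rw [sub_mulVec, one_mulVec, smul_mulVec, Mmat_mulVec_coopX]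
    abel
  rw [hvec, payoff_sub, payoff_smul, payoff_ones4 hdet, payoff_mulVec hdet,
    vInit_dotProduct_coopX, mul_one, sub_self]

end Payoff

/-- a ZD strategy enforces the linear payoff relation
`α·s_X + β·s_Y + γ = 0` against every opponent. -/
theorem zd_enforces_linear_relation (δ T S : ℝ) (hδ0 : 0 < δ) (hδ1 : δ < 1)
    (p : Fin 5 → ℝ) (hp : unitBox p) (α β γ : ℝ)
    (h1 : -1 + δ * p 1 + (1 - δ) * p 0 = α + β + γ)
    (h2 : -1 + δ * p 2 + (1 - δ) * p 0 = α * S + β * T + γ)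
    (h3 : δ * p 3 + (1 - δ) * p 0 = α * T + β * S + γ)
    (h4 : δ * p 4 + (1 - δ) * p 0 = γ) :
    ∀ q : Fin 5 → ℝ, unitBox q →
      α * sX δ T S p q + β * sY δ T S p q + γ = 0 := by
  intro q hq
  have hdet : IsUnit (1 - δ • Mmat p q).det := isUnit_iff_ne_zero.2 <|
    det_one_sub_smul_ne_zero_of_mem_rowStochastic (Mmat_mem_rowStochastic hp hq) hδ0.le hδ1
  have hcomb : α • SXvec T S + β • SYvec T S + γ • ones4
      = δ • ![p 1, p 2, p 3, p 4] + ((1 - δ) * p 0) • ones4 - coopX := by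
    ext i
    fin_cases i <;>
      simp only [SXvec, SYvec, ones4, coopX, Pi.add_apply, Pi.sub_apply, Pi.smul_apply, smul_eq_mul,
        Fin.isValue, Fin.zero_eta, Fin.mk_one, Fin.reduceFinMk, cons_val, cons_val_zero,
        cons_val_one] <;>
      linarith
  calc α * sX δ T S p q + β * sY δ T S p q + γ
      = payoff δ p q (α • SXvec T S + β • SYvec T S + γ • ones4) := by
        rw [payoff_add, payoff_add, payoff_smul, payoff_smul, payoff_smul, payoff_ones4 hdet,
          mul_one, sX, sY]
    _ = 0 := by rw [hcomb, payoff_zd_vector hdet]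

end ZDGame
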